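/- arXiv:1001.1748 — 4 statements merged into one kernel-verified Lean document; each statement's English description precedes it below -/
import Mathlib

section
/- If d ∈ ℓ∞(ℤ) is limit-periodic, then hull(d) is compact and there is a unique topological group structure on hull(d) with identity σ⁰(d) = d such that the map φ : ℤ → hull(d), k ↦ σᵏ(d), is a group homomorphism. Moreover, this group structure is abelian, and every neighborhood of d in hull(d) contains a compact open subgroup of finite index. -/
open BoundedContinuousFunction Filter

noncomputable def shiftk (k : ℤ) (d : ℤ →ᵇ ℝ) : ℤ →ᵇ ℝ :=
  d.compContinuous ⟨fun n => n + k, continuous_of_discreteTopology⟩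

noncomputable def orb (d : ℤ →ᵇ ℝ) : Set (ℤ →ᵇ ℝ) := Set.range (fun k : ℤ => shiftk k d)

noncomputable def hull (d : ℤ →ᵇ ℝ) : Set (ℤ →ᵇ ℝ) := closure (orb d)

def IsPeriodicPotential (p : ℤ →ᵇ ℝ) : Prop := (orb p).Finite

def IsLimitPeriodic (d : ℤ →ᵇ ℝ) : Prop :=
  d ∈ closure {p : ℤ →ᵇ ℝ | IsPeriodicPotential p}

noncomputable def shiftMem (d : ℤ →ᵇ ℝ) (k : ℤ) : ↥(hull d) :=
  ⟨shiftk k d, subset_closure ⟨k, rfl⟩⟩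

noncomputable def hullId (d : ℤ →ᵇ ℝ) : ↥(hull d) :=
  ⟨d, subset_closure ⟨0, by ext n; simp [shiftk]⟩⟩

noncomputable def freqModule (d : ℤ →ᵇ ℝ) : AddSubgroup ℝ :=
  AddSubgroup.closure {α : ℝ | ∃ L : ℂ, L ≠ 0 ∧
    Filter.Tendsto (fun n : ℕ => (1 / (2 * (n : ℂ))) *
      ∑ k ∈ Finset.Icc (-(n : ℤ)) (n : ℤ), (d k : ℂ) * Complex.exp (-(Complex.I) * k * α))
      Filter.atTop (nhds L)}

def IsFreqIntegerSet (d : ℤ →ᵇ ℝ) (S : Set ℕ) : Prop :=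
  (∀ n ∈ S, 0 < n) ∧
  freqModule d = AddSubgroup.closure ((fun n : ℕ => 2 * Real.pi / (n : ℝ)) '' S)

def CanonicalMul (d : ℤ →ᵇ ℝ) (m : ↥(hull d) → ↥(hull d) → ↥(hull d)) : Prop :=
  Continuous (fun p : ↥(hull d) × ↥(hull d) => m p.1 p.2) ∧
  ∀ k l : ℤ, m (shiftMem d k) (shiftMem d l) = shiftMem d (k + l)

def HullGroupIso (d e : ℤ →ᵇ ℝ) : Prop :=
  ∃ md me, CanonicalMul d md ∧ CanonicalMul e me ∧
    ∃ h : ↥(hull d) ≃ₜ ↥(hull e), ∀ x y, h (md x y) = me (h x) (h y)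

/-! The orbit map `k ↦ σᵏ d` pulls the sup metric back to a translation-invariant
pseudometric on `ℤ`, so addition and negation of `ℤ` are uniformly continuous along it and
extend uniquely to the closure `hull d` of the orbit. This makes `hull d` an abelian
topological group in which the multiples of `σ d` are dense.

If `‖d - p‖ < ε` with `p` of period `n`, then `‖σ^{kn} d - d‖ ≤ 2ε` for all `k`, so the
closure `H` of the subgroup generated by `σⁿ d` lies in the `2ε`-ball around `d`. The cosets
of the `σʲ d`, `0 ≤ j < n`, are closed and cover the dense orbit, so they cover `hull d`:
`H` is a closed subgroup of finite index, hence open. Compactness holds because `orb p` is a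
finite `ε`-net of `orb d`. -/

open Set Topology

section InvariantDist

variable {G X : Type*} [AddCommGroup G] [MetricSpace X] {φ : G → X}

def IsInvariantDist (φ : G → X) : Prop :=
  ∀ a b c : G, dist (φ (a + c)) (φ (b + c)) = dist (φ a) (φ b)

-- `extendAdd_apply` shows that the choice of preimages made here does not matter.
noncomputable def rangeAdd (φ : G → X) (p : ↥(range φ ×ˢ range φ)) : X :=
  φ (rangeSplitting φ ⟨_, p.2.1⟩ + rangeSplitting φ ⟨_, p.2.2⟩)

noncomputable def rangeNeg (φ : G → X) (x : range φ) : X :=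
  φ (-rangeSplitting φ x)

namespace DenseRange

variable (hd : DenseRange φ)

noncomputable def extendAdd (x y : X) : X :=
  (Dense.prod hd hd).extend (rangeAdd φ) (x, y)

noncomputable def extendNeg : X → X :=
  Dense.extend hd (rangeNeg φ)

end DenseRange

namespace IsInvariantDist

theorem dist_add_add_le (hφ : IsInvariantDist φ) (a b a' b' : G) :
    dist (φ (a + b)) (φ (a' + b')) ≤ dist (φ a) (φ a') + dist (φ b) (φ b') :=
  calc dist (φ (a + b)) (φ (a' + b'))
      ≤ dist (φ (a + b)) (φ (a' + b)) + dist (φ (b + a')) (φ (b' + a')) := by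
        simpa only [add_comm b, add_comm b'] using dist_triangle _ (φ (a' + b)) _
    _ = dist (φ a) (φ a') + dist (φ b) (φ b') := by rw [hφ, hφ]

theorem dist_neg_neg (hφ : IsInvariantDist φ) (a b : G) :
    dist (φ (-a)) (φ (-b)) = dist (φ a) (φ b) := by
  simpa [dist_comm (φ b)] using (hφ (-a) (-b) (a + b)).symm

theorem lipschitzWith_rangeAdd (hφ : IsInvariantDist φ) : LipschitzWith 2 (rangeAdd φ) := by
  refine LipschitzWith.of_dist_le_mul fun p q => ?_
  have h₁ : dist p.1.1 q.1.1 ≤ dist p q := le_max_left _ _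
  have h₂ : dist p.1.2 q.1.2 ≤ dist p q := le_max_right _ _
  calc dist (rangeAdd φ p) (rangeAdd φ q) ≤ dist p.1.1 q.1.1 + dist p.1.2 q.1.2 := by
        simpa only [rangeAdd, apply_rangeSplitting] using
          hφ.dist_add_add_le (rangeSplitting φ ⟨_, p.2.1⟩) (rangeSplitting φ ⟨_, p.2.2⟩)
            (rangeSplitting φ ⟨_, q.2.1⟩) (rangeSplitting φ ⟨_, q.2.2⟩)
    _ ≤ 2 * dist p q := by linarith

theorem isometry_rangeNeg (hφ : IsInvariantDist φ) : Isometry (rangeNeg φ) :=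
  Isometry.of_dist_eq fun x y => by
    simpa only [rangeNeg, apply_rangeSplitting, Subtype.dist_eq] using
      hφ.dist_neg_neg (rangeSplitting φ x) (rangeSplitting φ y)

theorem extendAdd_apply (hφ : IsInvariantDist φ) (hd : DenseRange φ) (a b : G) :
    hd.extendAdd (φ a) (φ b) = φ (a + b) := by
  have hab : (φ a, φ b) ∈ range φ ×ˢ range φ := ⟨mem_range_self a, mem_range_self b⟩
  refine (Dense.extend_of_ind _ hφ.lipschitzWith_rangeAdd.uniformContinuous ⟨_, hab⟩).trans ?_
  refine dist_le_zero.1 ((hφ.dist_add_add_le _ _ _ _).trans ?_)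
  simp only [apply_rangeSplitting, dist_self, add_zero, le_refl]

theorem extendNeg_apply (hφ : IsInvariantDist φ) (hd : DenseRange φ) (a : G) :
    hd.extendNeg (φ a) = φ (-a) := by
  refine (Dense.extend_of_ind _ hφ.isometry_rangeNeg.uniformContinuous
    ⟨_, mem_range_self a⟩).trans (dist_le_zero.1 ?_)
  rw [rangeNeg, hφ.dist_neg_neg, apply_rangeSplitting φ, dist_self]

variable [CompleteSpace X]

theorem continuous_extendAdd (hφ : IsInvariantDist φ) (hd : DenseRange φ) :
    Continuous fun p : X × X => hd.extendAdd p.1 p.2 :=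
  (Dense.uniformContinuous_extend _ hφ.lipschitzWith_rangeAdd.uniformContinuous).continuous

theorem continuous_extendNeg (hφ : IsInvariantDist φ) (hd : DenseRange φ) :
    Continuous hd.extendNeg :=
  (Dense.uniformContinuous_extend _ hφ.isometry_rangeNeg.uniformContinuous).continuous

theorem extendAdd_assoc (hφ : IsInvariantDist φ) (hd : DenseRange φ) (x y z : X) :
    hd.extendAdd (hd.extendAdd x y) z = hd.extendAdd x (hd.extendAdd y z) := by
  have hc := hφ.continuous_extendAdd hd
  refine hd.induction_on₃ (isClosed_eq ?_ ?_) (fun a b c => ?_) x y z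
  · exact hc.comp₂ (hc.comp₂ continuous_fst (continuous_fst.comp continuous_snd))
      (continuous_snd.comp continuous_snd)
  · exact hc.comp₂ continuous_fst (hc.comp₂ (continuous_fst.comp continuous_snd)
      (continuous_snd.comp continuous_snd))
  · simp only [hφ.extendAdd_apply, add_assoc]

theorem extendAdd_comm (hφ : IsInvariantDist φ) (hd : DenseRange φ) (x y : X) :
    hd.extendAdd x y = hd.extendAdd y x := by
  have hc := hφ.continuous_extendAdd hd
  refine hd.induction_on₂ (isClosed_eq hc (hc.comp continuous_swap)) (fun a b => ?_) x y
  simp only [hφ.extendAdd_apply, add_comm]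

theorem extendAdd_zero_left (hφ : IsInvariantDist φ) (hd : DenseRange φ) (x : X) :
    hd.extendAdd (φ 0) x = x := by
  have hc := hφ.continuous_extendAdd hd
  refine hd.induction_on x (isClosed_eq (hc.comp₂ continuous_const continuous_id)
    continuous_id) fun a => ?_
  simp only [hφ.extendAdd_apply, zero_add]

theorem extendAdd_extendNeg_self (hφ : IsInvariantDist φ) (hd : DenseRange φ) (x : X) :
    hd.extendAdd (hd.extendNeg x) x = φ 0 := by
  have hc := hφ.continuous_extendAdd hd
  refine hd.induction_on x (isClosed_eq
    (hc.comp₂ (hφ.continuous_extendNeg hd) continuous_id) continuous_const) fun a => ?_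
  simp only [hφ.extendNeg_apply, hφ.extendAdd_apply, neg_add_cancel]

noncomputable abbrev addCommGroup (hφ : IsInvariantDist φ) (hd : DenseRange φ) :
    AddCommGroup X :=
  letI : Add X := ⟨hd.extendAdd⟩
  letI : Zero X := ⟨φ 0⟩
  letI : Neg X := ⟨hd.extendNeg⟩
  { add_assoc := hφ.extendAdd_assoc hd
    zero_add := hφ.extendAdd_zero_left hd
    add_zero x := (hφ.extendAdd_comm hd x _).trans (hφ.extendAdd_zero_left hd x)
    add_comm := hφ.extendAdd_comm hd
    neg_add_cancel := hφ.extendAdd_extendNeg_self hd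
    nsmul := nsmulRec
    zsmul := zsmulRec }

end IsInvariantDist

end InvariantDist

open AddSubgroup (zmultiples)

section Monothetic

variable {X : Type*} [AddCommGroup X] [TopologicalSpace X] [IsTopologicalAddGroup X] {x : X}

theorem exists_sub_zsmul_mem_closure_zmultiples (hx : Dense (zmultiples x : Set X)) {n : ℤ}
    (hn : 0 < n) (g : X) :
    ∃ j ∈ Finset.Ico 0 n, g - j • x ∈ closure (zmultiples (n • x) : Set X) := by
  let S := ⋃ j ∈ Finset.Ico 0 n, (· - j • x) ⁻¹' closure (zmultiples (n • x) : Set X)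
  have hS : IsClosed S := isClosed_biUnion_finset fun j _ =>
    isClosed_closure.preimage (continuous_sub_right _)
  have hxS : (zmultiples x : Set X) ⊆ S := by
    rintro _ ⟨k, rfl⟩
    refine mem_iUnion₂.2 ⟨k % n, Finset.mem_Ico.2 ⟨Int.emod_nonneg k hn.ne',
      Int.emod_lt_of_pos k hn⟩, subset_closure ⟨k / n, ?_⟩⟩
    dsimp only
    rw [← mul_zsmul', sub_eq_add_neg, ← sub_zsmul]
    congr 1
    linarith [Int.emod_add_mul_ediv k n]
  simpa [S] using hS.closure_subset_iff.2 hxS (hx.closure_eq ▸ mem_univ g)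

theorem isOpen_closure_zmultiples_zsmul (hx : Dense (zmultiples x : Set X)) {n : ℤ}
    (hn : 0 < n) : IsOpen (closure (zmultiples (n • x) : Set X)) := by
  let H := (zmultiples (n • x)).topologicalClosure
  have : Finite (X ⧸ H) := by
    refine Finite.of_surjective (fun j : Finset.Ico 0 n => ((j.1 • x : X) : X ⧸ H)) ?_
    rintro ⟨g⟩
    obtain ⟨j, hj, hgj⟩ := exists_sub_zsmul_mem_closure_zmultiples hx hn g
    exact ⟨⟨j, hj⟩, QuotientAddGroup.eq.2 (by rwa [neg_add_eq_sub])⟩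
  have := H.finiteIndex_of_finite_quotient
  exact H.isOpen_of_isClosed_of_finiteIndex (zmultiples (n • x)).isClosed_topologicalClosure

end Monothetic

theorem shiftk_zero (d : ℤ →ᵇ ℝ) : shiftk 0 d = d := by
  ext n
  simp [shiftk]

theorem shiftk_add (k l : ℤ) (d : ℤ →ᵇ ℝ) : shiftk (k + l) d = shiftk l (shiftk k d) := by
  ext n
  simp only [shiftk, compContinuous_apply, ContinuousMap.coe_mk, add_assoc, add_comm k]

theorem isometry_shiftk (k : ℤ) : Isometry (shiftk k) := by
  have hle (k : ℤ) (a b : ℤ →ᵇ ℝ) : dist (shiftk k a) (shiftk k b) ≤ dist a b := by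
    simpa [shiftk] using (lipschitz_compContinuous _).dist_le_mul a b
  refine Isometry.of_dist_eq fun a b => (hle k a b).antisymm ?_
  simpa only [← shiftk_add, add_neg_cancel, shiftk_zero] using hle (-k) (shiftk k a) (shiftk k b)

theorem IsPeriodicPotential.exists_pos_period {p : ℤ →ᵇ ℝ} (hp : IsPeriodicPotential p) :
    ∃ n : ℤ, 0 < n ∧ shiftk n p = p := by
  have period_of_eq {a b : ℤ} (h : shiftk a p = shiftk b p) : shiftk (b - a) p = p := by
    rw [sub_eq_add_neg, shiftk_add, ← h, ← shiftk_add, add_neg_cancel, shiftk_zero]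
  obtain ⟨a, b, hab, hne⟩ :=
    Function.not_injective_iff.1 fun hinj => infinite_range_of_injective hinj hp
  rcases hne.lt_or_gt with h | h
  exacts [⟨b - a, sub_pos.2 h, period_of_eq hab⟩, ⟨a - b, sub_pos.2 h, period_of_eq hab.symm⟩]

theorem shiftk_mul_period {p : ℤ →ᵇ ℝ} {n : ℤ} (hn : shiftk n p = p) (k : ℤ) :
    shiftk (k * n) p = p := by
  have hper : Function.Periodic (fun k => shiftk k p) n := fun k => by
    simp only [add_comm k, shiftk_add, hn]
  simpa [shiftk_zero] using hper.int_mul_eq k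

theorem dist_shiftk_mul_period_le {p : ℤ →ᵇ ℝ} {n : ℤ} (hn : shiftk n p = p) (d : ℤ →ᵇ ℝ)
    (k : ℤ) : dist (shiftk (k * n) d) d ≤ 2 * dist d p :=
  calc dist (shiftk (k * n) d) d
      ≤ dist (shiftk (k * n) d) (shiftk (k * n) p) + dist (shiftk (k * n) p) d :=
        dist_triangle _ _ _
    _ = 2 * dist d p := by
      rw [(isometry_shiftk _).dist_eq, shiftk_mul_period hn, dist_comm p]
      ring

theorem isCompact_hull {d : ℤ →ᵇ ℝ} (hd : IsLimitPeriodic d) : IsCompact (hull d) := by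
  refine (TotallyBounded.closure ?_).isCompact_of_isClosed isClosed_closure
  refine Metric.totallyBounded_iff.2 fun ε hε => ?_
  obtain ⟨p, hp, hdp⟩ := Metric.mem_closure_iff.1 hd ε hε
  refine ⟨orb p, hp, ?_⟩
  rintro _ ⟨k, rfl⟩
  exact mem_biUnion (mem_range_self k) (by rwa [Metric.mem_ball, (isometry_shiftk k).dist_eq])

section HullGroup

variable (d : ℤ →ᵇ ℝ)

theorem isInvariantDist_shiftMem : IsInvariantDist (shiftMem d) := fun a b c => by
  simp only [Subtype.dist_eq, shiftMem, shiftk_add _ c, (isometry_shiftk c).dist_eq]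

theorem denseRange_shiftMem : DenseRange (shiftMem d) := by
  intro x
  rw [closure_subtype, ← range_comp]
  exact x.2

instance : CompleteSpace (hull d) := isClosed_closure.completeSpace_coe

noncomputable instance : AddCommGroup (hull d) :=
  (isInvariantDist_shiftMem d).addCommGroup (denseRange_shiftMem d)

instance : IsTopologicalAddGroup (hull d) where
  continuous_add := (isInvariantDist_shiftMem d).continuous_extendAdd (denseRange_shiftMem d)
  continuous_neg := (isInvariantDist_shiftMem d).continuous_extendNeg (denseRange_shiftMem d)

theorem shiftMem_add (k l : ℤ) : shiftMem d (k + l) = shiftMem d k + shiftMem d l :=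
  ((isInvariantDist_shiftMem d).extendAdd_apply (denseRange_shiftMem d) k l).symm

theorem hullId_eq_zero : hullId d = 0 :=
  Subtype.ext (shiftk_zero d).symm

theorem coe_hull_zero : ((0 : hull d) : ℤ →ᵇ ℝ) = d :=
  shiftk_zero d

theorem shiftMem_eq_zsmul (k : ℤ) : shiftMem d k = k • shiftMem d 1 := by
  simpa using map_zsmul (AddMonoidHom.mk' (shiftMem d) (shiftMem_add d)) k 1

theorem dense_zmultiples_shiftMem_one : Dense (zmultiples (shiftMem d 1) : Set (hull d)) :=
  (denseRange_shiftMem d).mono <| range_subset_iff.2 fun k =>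
    AddSubgroup.mem_zmultiples_iff.2 ⟨k, (shiftMem_eq_zsmul d k).symm⟩

theorem eq_add_of_continuous {m : hull d → hull d → hull d}
    (hm : Continuous fun p : hull d × hull d => m p.1 p.2)
    (hmk : ∀ k l : ℤ, m (shiftMem d k) (shiftMem d l) = shiftMem d (k + l)) : m = (· + ·) := by
  funext x y
  refine (denseRange_shiftMem d).induction_on₂ (isClosed_eq hm continuous_add)
    (fun k l => ?_) x y
  rw [hmk, shiftMem_add]

end HullGroup

theorem exists_closure_zmultiples_subset {d : ℤ →ᵇ ℝ} (hd : IsLimitPeriodic d)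
    {U : Set (hull d)} (hU : U ∈ 𝓝 0) :
    ∃ n : ℤ, 0 < n ∧ closure (zmultiples (n • shiftMem d 1) : Set (hull d)) ⊆ U := by
  obtain ⟨ε, hε, hball⟩ := Metric.mem_nhds_iff.1 hU
  obtain ⟨p, hp, hdp⟩ := Metric.mem_closure_iff.1 hd (ε / 3) (by positivity)
  obtain ⟨n, hn, hper⟩ := hp.exists_pos_period
  refine ⟨n, hn, (closure_minimal ?_ Metric.isClosed_closedBall).trans
    ((Metric.closedBall_subset_ball (by linarith : 2 * (ε / 3) < ε)).trans hball)⟩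
  rintro _ ⟨k, rfl⟩
  dsimp only
  rw [Metric.mem_closedBall, ← mul_zsmul', ← shiftMem_eq_zsmul, mul_comm, Subtype.dist_eq,
    coe_hull_zero]
  exact (dist_shiftk_mul_period_le hper d k).trans (by linarith)

/-- If `d ∈ ℓ∞(ℤ)` is limit-periodic, then `hull d` is compact, there is a
unique (topological) group structure on `hull d` with identity `d` making
`φ : k ↦ σᵏ d` a homomorphism; moreover this structure is abelian and every neighborhood of `d`
contains a compact open finite-index subgroup. -/
theorem statement_0 (d : ℤ →ᵇ ℝ) (hd : IsLimitPeriodic d) :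
    IsCompact (hull d) ∧
    (∃! m : ↥(hull d) → ↥(hull d) → ↥(hull d),
      Continuous (fun p : ↥(hull d) × ↥(hull d) => m p.1 p.2) ∧
      (∀ x, m (hullId d) x = x) ∧ (∀ x, m x (hullId d) = x) ∧
      (∀ x y z, m (m x y) z = m x (m y z)) ∧
      (∃ inv : ↥(hull d) → ↥(hull d), Continuous inv ∧
        ∀ x, m x (inv x) = hullId d ∧ m (inv x) x = hullId d) ∧
      (∀ k l : ℤ, m (shiftMem d k) (shiftMem d l) = shiftMem d (k + l))) ∧
    (∀ m : ↥(hull d) → ↥(hull d) → ↥(hull d),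
      (Continuous (fun p : ↥(hull d) × ↥(hull d) => m p.1 p.2) ∧
      (∀ x, m (hullId d) x = x) ∧ (∀ x, m x (hullId d) = x) ∧
      (∀ x y z, m (m x y) z = m x (m y z)) ∧
      (∃ inv : ↥(hull d) → ↥(hull d), Continuous inv ∧
        ∀ x, m x (inv x) = hullId d ∧ m (inv x) x = hullId d) ∧
      (∀ k l : ℤ, m (shiftMem d k) (shiftMem d l) = shiftMem d (k + l))) →
      -- the group structure is abelian
      (∀ x y, m x y = m y x) ∧
      -- every neighborhood of `d` contains a compact open finite-index subgroup
      (∀ U ∈ nhds (hullId d), ∃ H : Set ↥(hull d),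
        H ⊆ U ∧ IsCompact H ∧ IsOpen H ∧ hullId d ∈ H ∧
        (∀ x ∈ H, ∀ y ∈ H, m x y ∈ H) ∧
        (∀ x ∈ H, ∀ y, m x y = hullId d → y ∈ H) ∧
        (∃ F : Finset ↥(hull d), ∀ g : ↥(hull d), ∃ c ∈ F, ∃ h ∈ H, g = m c h))) := by
  classical
  simp only [hullId_eq_zero]
  refine ⟨isCompact_hull hd, ⟨(· + ·), ⟨continuous_add, zero_add, add_zero, add_assoc,
    ⟨Neg.neg, continuous_neg, fun x => ⟨add_neg_cancel x, neg_add_cancel x⟩⟩,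
    fun k l => (shiftMem_add d k l).symm⟩,
    fun _ ⟨hm, _, _, _, _, hmk⟩ => eq_add_of_continuous d hm hmk⟩, ?_⟩
  rintro m ⟨hm, -, -, -, -, hmk⟩
  obtain rfl := eq_add_of_continuous d hm hmk
  refine ⟨add_comm, fun U hU => ?_⟩
  obtain ⟨n, hn, hHU⟩ := exists_closure_zmultiples_subset hd hU
  have hdense := dense_zmultiples_shiftMem_one d
  have : CompactSpace (hull d) := isCompact_iff_compactSpace.1 (isCompact_hull hd)
  let H := (zmultiples (n • shiftMem d 1)).topologicalClosure
  refine ⟨H, hHU, isClosed_closure.isCompact, isOpen_closure_zmultiples_zsmul hdense hn,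
    H.zero_mem, fun x hx y hy => H.add_mem hx hy, fun x hx y hxy => ?_,
    (Finset.Ico 0 n).image (· • shiftMem d 1), fun g => ?_⟩
  · rw [eq_neg_of_add_eq_zero_right hxy]
    exact H.neg_mem hx
  · obtain ⟨j, hj, hgj⟩ := exists_sub_zsmul_mem_closure_zmultiples hdense hn g
    exact ⟨j • shiftMem d 1, Finset.mem_image_of_mem _ hj, _, hgj, (add_sub_cancel _ _).symm⟩
end

section
/- If d ∈ ℓ∞(ℤ) is limit-periodic, then there exist positive integers n₁, n₂, … with n_j | n_{j+1} and potentials p_j ∈ ℓ∞(ℤ) with p_j periodic of period n_j, such that d(k) = Σ_{j=1}^∞ p_j(k) for every k ∈ ℤ, the series converging uniformly in k. -/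
/-!
Choose periodic potentials `q j → d`. If `q j` has period `m j`, then every `q i` with `i ≤ j`
has the period `n j = m 0 * ⋯ * m j`, so the telescoping differences `p j = q j - q (j - 1)`
are `n j`-periodic, `n j ∣ n (j + 1)`, and the partial sums of `∑ p j` are the `q j`.
-/

open BoundedContinuousFunction Filter

open Finset Function

lemma Function.Periodic.of_dvd {β : Type*} {f : ℤ → β} {a b : ℤ} (h : Periodic f a)
    (hab : a ∣ b) : Periodic f b := by
  obtain ⟨k, rfl⟩ := hab
  rw [mul_comm]
  exact h.int_mul k

lemma shiftk_apply (k : ℤ) (d : ℤ →ᵇ ℝ) (n : ℤ) : shiftk k d n = d (n + k) := rfl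

lemma shiftk_eq_shiftk_iff {p : ℤ →ᵇ ℝ} {a b : ℤ} :
    shiftk a p = shiftk b p ↔ Periodic p (a - b) := by
  refine ⟨fun h x => ?_, fun h => ext fun n => ?_⟩
  · simpa only [shiftk_apply, sub_add_cancel, sub_add_eq_add_sub, add_sub_assoc] using
      DFunLike.congr_fun h (x - b)
  · simpa only [shiftk_apply, add_sub_cancel, add_assoc] using h (n + b)

lemma isPeriodicPotential_iff_exists_periodic {p : ℤ →ᵇ ℝ} :
    IsPeriodicPotential p ↔ ∃ m : ℕ, 0 < m ∧ Periodic p m := by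
  constructor
  · intro h
    obtain ⟨a, b, hab, hne⟩ :=
      not_injective_iff.1 fun hinj => Set.infinite_range_of_injective hinj h
    have hper : Periodic p (a - b) := shiftk_eq_shiftk_iff.1 hab
    refine ⟨(a - b).natAbs, Int.natAbs_pos.2 (sub_ne_zero.2 hne), ?_⟩
    rw [Int.natCast_natAbs]
    rcases abs_choice (a - b) with habs | habs <;> rw [habs]
    exacts [hper, hper.neg]
  · rintro ⟨m, hm, hper⟩
    have hm' : (0 : ℤ) < m := Int.natCast_pos.2 hm
    refine ((Set.finite_Ico 0 (m : ℤ)).image fun r => shiftk r p).subset ?_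
    rintro _ ⟨k, rfl⟩
    refine ⟨k % m, ⟨Int.emod_nonneg k hm'.ne', Int.emod_lt_of_pos k hm'⟩, ?_⟩
    have hk : k % m - k = -(k / m) * m := by rw [Int.emod_def]; ring
    exact shiftk_eq_shiftk_iff.2 (hk ▸ hper.int_mul _)

def successiveDiff {E : Type*} [Sub E] (q : ℕ → E) : ℕ → E
  | 0 => q 0
  | j + 1 => q (j + 1) - q j

section successiveDiff

variable {E : Type*} [AddCommGroup E]

lemma sum_range_succ_successiveDiff (q : ℕ → E) (J : ℕ) :
    ∑ j ∈ range (J + 1), successiveDiff q j = q J := by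
  induction J with
  | zero => simp [successiveDiff]
  | succ J ih => rw [sum_range_succ, ih, successiveDiff, add_sub_cancel]

lemma tendsto_sum_successiveDiff [TopologicalSpace E] {q : ℕ → E} {x : E}
    (h : Tendsto q atTop (nhds x)) :
    Tendsto (fun J => ∑ j ∈ range J, successiveDiff q j) atTop (nhds x) := by
  rw [← tendsto_add_atTop_iff_nat 1]
  simpa only [sum_range_succ_successiveDiff] using h

end successiveDiff

lemma periodic_successiveDiff {β : Type*} [SeminormedAddCommGroup β] {q : ℕ → ℤ →ᵇ β}
    {n : ℕ → ℤ} (hq : ∀ j, Periodic (q j) (n j)) (hn : ∀ j, n j ∣ n (j + 1)) :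
    ∀ j, Periodic (⇑(successiveDiff q j)) (n j)
  | 0 => hq 0
  | j + 1 => by
    rw [successiveDiff, BoundedContinuousFunction.coe_sub]
    exact (hq (j + 1)).sub ((hq j).of_dvd (hn j))

/-- A limit-periodic `d` is a uniformly convergent sum `d = Σ_j p_j` of
periodic potentials `p_j` with periods `n_j` satisfying `n_j ∣ n_{j+1}`. -/
theorem statement_1 (d : ℤ →ᵇ ℝ) (hd : IsLimitPeriodic d) :
    ∃ n : ℕ → ℕ, (∀ j, 0 < n j) ∧ (∀ j, n j ∣ n (j + 1)) ∧
      ∃ p : ℕ → (ℤ →ᵇ ℝ),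
        (∀ j, IsPeriodicPotential (p j)) ∧
        (∀ j, ∀ k : ℤ, p j (k + (n j : ℤ)) = p j k) ∧
        Filter.Tendsto (fun J : ℕ => ∑ j ∈ Finset.range J, p j) Filter.atTop (nhds d) := by
  obtain ⟨q, hq_periodic, hq_lim⟩ := mem_closure_iff_seq_limit.1 hd
  choose m hm_pos hm_per using fun j => isPeriodicPotential_iff_exists_periodic.1 (hq_periodic j)
  set n : ℕ → ℕ := fun j => ∏ i ∈ range (j + 1), m i
  have hn_pos : ∀ j, 0 < n j := fun j => prod_pos fun i _ => hm_pos i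
  have hn_dvd : ∀ j, n j ∣ n (j + 1) := fun j => by
    simp only [n, prod_range_succ _ (j + 1)]
    exact dvd_mul_right _ _
  have hq_per : ∀ j, Periodic (q j) (n j : ℤ) := fun j =>
    (hm_per j).of_dvd (Int.natCast_dvd_natCast.2 (dvd_prod_of_mem _ (self_mem_range_succ j)))
  have hp_per := periodic_successiveDiff hq_per fun j => Int.natCast_dvd_natCast.2 (hn_dvd j)
  exact ⟨n, hn_pos, hn_dvd, successiveDiff q,
    fun j => isPeriodicPotential_iff_exists_periodic.2 ⟨n j, hn_pos j, hp_per j⟩, hp_per,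
    tendsto_sum_successiveDiff hq_lim⟩
end

section
/- Let Ω be a Cantor group, T a minimal translation of Ω, and f ∈ C(Ω,ℝ). Define F : Ω → ℓ∞(ℤ) by F(ω) = (f(Tⁿ(ω)))_{n∈ℤ}. Then F(ω) is limit-periodic for every ω ∈ Ω, and F(Ω) = hull(F(ω)) for every ω ∈ Ω. -/
/-!
On a compact group `f` is uniformly continuous, and a profinite group has a basis of open
subgroups at `1`, so `f` varies by less than `ε` inside the cosets of some open subgroup `H`. The
image of `a` in the finite group `Ω ⧸ H` has finite order `N`, hence `f (ω * a ^ n)` is `ε`-close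
to the `N`-periodic sequence `n ↦ f (ω * a ^ (n % N))`.

The map `F = sample f a` is continuous on a compact space and intertwines the translation with the
shift, so it maps the closure of the orbit of `ω`, which is all of `Ω` by minimality, onto the
closure of the shift orbit of `F ω`.
-/

open BoundedContinuousFunction Filter

variable {Ω : Type*} [TopologicalSpace Ω] [CommGroup Ω] [IsTopologicalGroup Ω] [CompactSpace Ω]
  [TotallyDisconnectedSpace Ω]

/-- The translation `T(ω) = ω·a` is minimal: every `T`-orbit is dense. -/
def IsMinimalTranslation (a : Ω) : Prop :=
  ∀ ω : Ω, Dense (Set.range fun n : ℤ => ω * a ^ n)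

/-- `Ω` has no isolated points. -/
def NoIsolatedPoints (Ω : Type*) [TopologicalSpace Ω] : Prop :=
  ∀ ω : Ω, Filter.NeBot (nhdsWithin ω {ω}ᶜ)

/-- `F(ω) = (f(Tⁿ(ω)))_{n ∈ ℤ}` where `T` is the translation by `a`. -/
noncomputable def sample (f : C(Ω, ℝ)) (a ω : Ω) : ℤ →ᵇ ℝ :=
  (BoundedContinuousFunction.mkOfCompact f).compContinuous
    ⟨fun n : ℤ => ω * a ^ n, continuous_of_discreteTopology⟩

open scoped Topology

section UniformTranslation

variable {G E : Type*} [TopologicalSpace G] [CommGroup G] [IsTopologicalGroup G] [CompactSpace G]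
  [PseudoMetricSpace E]

theorem exists_mem_nhds_one_forall_dist_mul_lt (f : C(G, E)) {ε : ℝ} (hε : 0 < ε) :
    ∃ U ∈ 𝓝 (1 : G), ∀ x, ∀ u ∈ U, dist (f (x * u)) (f x) < ε := by
  let _ : UniformSpace G := IsTopologicalGroup.rightUniformSpace G
  have : IsUniformGroup G := isUniformGroup_of_commGroup
  have hf : UniformContinuous f := CompactSpace.uniformContinuous_of_continuous f.continuous
  have hmem := hf (Metric.dist_mem_uniformity hε)
  rw [uniformity_eq_comap_nhds_one] at hmem
  obtain ⟨U, hU, hUsub⟩ := hmem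
  refine ⟨U, hU, fun x u hu => ?_⟩
  rw [dist_comm]
  exact hUsub (show (x, x * u) ∈ (fun p : G × G => p.2 / p.1) ⁻¹' U by simpa using hu)

theorem exists_openSubgroup_forall_dist_mul_lt [TotallyDisconnectedSpace G] (f : C(G, E))
    {ε : ℝ} (hε : 0 < ε) : ∃ H : OpenSubgroup G, ∀ x, ∀ h ∈ H, dist (f (x * h)) (f x) < ε := by
  obtain ⟨U, hU, hfU⟩ := exists_mem_nhds_one_forall_dist_mul_lt f hε
  obtain ⟨V, hVU, hVopen, hV1⟩ := mem_nhds_iff.mp hU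
  obtain ⟨H, hHV⟩ := ProfiniteGrp.exist_openNormalSubgroup_sub_open_nhds_of_one hVopen hV1
  exact ⟨H.toOpenSubgroup, fun x h hh => hfU x h (hVU (hHV hh))⟩

end UniformTranslation

section Periodic

theorem isPeriodicPotential_of_periodic {p : ℤ →ᵇ ℝ} {N : ℤ} (hN : 0 < N)
    (hp : Function.Periodic p N) : IsPeriodicPotential p := by
  refine ((Set.finite_Ico 0 N).image fun j => shiftk j p).subset ?_
  rintro _ ⟨k, rfl⟩
  refine ⟨k % N, ⟨Int.emod_nonneg k hN.ne', Int.emod_lt_of_pos k hN⟩, ?_⟩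
  ext n
  change p (n + k % N) = p (n + k)
  rw [← hp.int_mul (k / N) (n + k % N), Int.cast_id, add_assoc,
    Int.emod_add_ediv_mul]

noncomputable def periodize (d : ℤ →ᵇ ℝ) (N : ℤ) : ℤ →ᵇ ℝ :=
  d.compContinuous ⟨fun n => n % N, continuous_of_discreteTopology⟩

theorem periodize_apply (d : ℤ →ᵇ ℝ) (N n : ℤ) : periodize d N n = d (n % N) := rfl

theorem periodic_periodize (d : ℤ →ᵇ ℝ) (N : ℤ) : Function.Periodic (periodize d N) N := by
  intro n
  simp only [periodize_apply, Int.add_emod_right]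

end Periodic

section Sample

variable {G : Type*} [TopologicalSpace G] [CommGroup G] [CompactSpace G]

theorem sample_apply (f : C(G, ℝ)) (a ω : G) (n : ℤ) : sample f a ω n = f (ω * a ^ n) := rfl

theorem shiftk_sample (f : C(G, ℝ)) (a ω : G) (k : ℤ) :
    shiftk k (sample f a ω) = sample f a (ω * a ^ k) := by
  ext n
  change f (ω * a ^ (n + k)) = f (ω * a ^ k * a ^ n)
  rw [zpow_add, mul_right_comm, mul_assoc]

theorem dist_sample_mul_le (f : C(G, ℝ)) (a ω u : G) {ε : ℝ}
    (hu : ∀ x, dist (f (x * u)) (f x) ≤ ε) : dist (sample f a (ω * u)) (sample f a ω) ≤ ε := by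
  refine (BoundedContinuousFunction.dist_le (dist_nonneg.trans (hu 1))).mpr fun n => ?_
  rw [sample_apply, sample_apply, mul_right_comm]
  exact hu _

theorem continuous_sample [IsTopologicalGroup G] (f : C(G, ℝ)) (a : G) :
    Continuous (sample f a) := by
  refine continuous_iff_continuousAt.mpr fun ω => Metric.tendsto_nhds.mpr fun ε hε => ?_
  obtain ⟨U, hU, hfU⟩ := exists_mem_nhds_one_forall_dist_mul_lt f (half_pos hε)
  have hω : ∀ᶠ ω' in 𝓝 ω, ω⁻¹ * ω' ∈ U := by
    refine (continuous_const.mul continuous_id).continuousAt.preimage_mem_nhds ?_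
    simpa using hU
  filter_upwards [hω] with ω' hω'
  calc dist (sample f a ω') (sample f a ω)
      = dist (sample f a (ω * (ω⁻¹ * ω'))) (sample f a ω) := by rw [mul_inv_cancel_left]
    _ ≤ ε / 2 := dist_sample_mul_le f a ω _ fun x => (hfU x _ hω').le
    _ < ε := half_lt_self hε

theorem hull_sample [IsTopologicalGroup G] (f : C(G, ℝ)) {a : G} (hmin : IsMinimalTranslation a)
    (ω : G) :
    hull (sample f a ω) = Set.range (sample f a) := by
  have horb : orb (sample f a ω) = sample f a '' Set.range fun k : ℤ => ω * a ^ k := by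
    simp only [orb, shiftk_sample, ← Set.range_comp, Function.comp_def]
  have hclosed := (continuous_sample f a).isClosedMap
  rw [hull, horb, hclosed.closure_image_eq_of_continuous (continuous_sample f a),
    (hmin ω).closure_eq, Set.image_univ]

theorem isLimitPeriodic_sample [IsTopologicalGroup G] [TotallyDisconnectedSpace G] (f : C(G, ℝ))
    (a ω : G) : IsLimitPeriodic (sample f a ω) := by
  refine Metric.mem_closure_iff.mpr fun ε hε => ?_
  obtain ⟨H, hfH⟩ := exists_openSubgroup_forall_dist_mul_lt f (half_pos hε)
  have hN : 0 < ((H : Subgroup G).index : ℤ) := by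
    exact_mod_cast Nat.pos_of_ne_zero (H : Subgroup G).index_ne_zero_of_finite
  have haN : a ^ ((H : Subgroup G).index : ℤ) ∈ H := by
    exact_mod_cast (H : Subgroup G).pow_index_mem a
  generalize ((H : Subgroup G).index : ℤ) = N at hN haN
  refine ⟨periodize (sample f a ω) N, isPeriodicPotential_of_periodic hN (periodic_periodize _ _),
    ((BoundedContinuousFunction.dist_le (half_pos hε).le).mpr fun n => ?_).trans_lt
      (half_lt_self hε)⟩
  have hmem : a ^ (N * (n / N)) ∈ H := by
    rw [zpow_mul]
    exact Subgroup.zpow_mem _ haN _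
  have hsplit : ω * a ^ n = ω * a ^ (n % N) * a ^ (N * (n / N)) := by
    rw [mul_assoc, ← zpow_add, Int.emod_add_mul_ediv]
  rw [periodize_apply, sample_apply, sample_apply, hsplit]
  exact (hfH _ _ hmem).le

end Sample

theorem statement_9_general {Ω : Type*} [TopologicalSpace Ω] [CommGroup Ω] [IsTopologicalGroup Ω]
    [CompactSpace Ω] [TotallyDisconnectedSpace Ω]
    (a : Ω) (hmin : IsMinimalTranslation a) (f : C(Ω, ℝ)) :
    (∀ ω : Ω, IsLimitPeriodic (sample f a ω)) ∧
    (∀ ω : Ω, Set.range (sample f a) = hull (sample f a ω)) :=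
  ⟨isLimitPeriodic_sample f a, fun ω => (hull_sample f hmin ω).symm⟩

/-- If `Ω` is a Cantor group, `T` a minimal translation (by `a`) and
`f ∈ C(Ω,ℝ)`, then `F(ω) = (f(Tⁿω))_{n∈ℤ}` is limit-periodic for every `ω`, and
`F(Ω) = hull (F(ω))` for every `ω ∈ Ω`. -/
theorem statement_9 {Ω : Type*} [TopologicalSpace Ω] [CommGroup Ω] [IsTopologicalGroup Ω]
    [CompactSpace Ω] [TotallyDisconnectedSpace Ω] (hni : NoIsolatedPoints Ω)
    (a : Ω) (hmin : IsMinimalTranslation a) (f : C(Ω, ℝ)) :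
    (∀ ω : Ω, IsLimitPeriodic (sample f a ω)) ∧
    (∀ ω : Ω, Set.range (sample f a) = hull (sample f a ω)) :=
  statement_9_general a hmin f
end

section
/- With the notation below: (1) for every closed subgroup N of B̄, the quotient B̄/N is a procyclic group isomorphic to an inverse limit of cyclic groups ℤ_{m_k} where m_k | n_k and m_k | m_{k+1} for all k; (2) conversely, for every sequence (m_k) of positive integers with m_k | n_k and m_k | m_{k+1} for all k, the inverse limit of the cyclic groups ℤ_{m_k} (with the natural projection maps) is isomorphic as a topological group to a quotient of B̄ by a closed subgroup. -/
/-- Each cyclic group `ZMod n` carries the discrete topology. -/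
instance zmodTopologicalSpace (n : ℕ) : TopologicalSpace (ZMod n) := ⊥

instance zmodDiscreteTopology (n : ℕ) : DiscreteTopology (ZMod n) := ⟨rfl⟩

instance zmodTopologicalAddGroup (n : ℕ) : IsTopologicalAddGroup (ZMod n) where
  continuous_add := continuous_of_discreteTopology
  continuous_neg := continuous_of_discreteTopology

/-- The constant sequence `kE = (k, k, k, …)` in `A = ∏_j ℤ_{n_j}`. -/
def Ebar (n : ℕ → ℕ) (k : ℤ) : ∀ j : ℕ, ZMod (n j) := fun j => (k : ZMod (n j))

/-- `B̄`, the closure in `A = ∏_j ℤ_{n_j}` of the cyclic subgroup `{nE : n ∈ ℤ}`. -/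
noncomputable def Bbar (n : ℕ → ℕ) : Set (∀ j : ℕ, ZMod (n j)) :=
  closure (Set.range fun k : ℤ => Ebar n k)

/-- `B̄` as a closed additive subgroup of `A = ∏_k ℤ_{n_k}`: the topological closure of the
cyclic subgroup generated by `E = (1,1,1,…)`. -/
noncomputable def Bsub (n : ℕ → ℕ) : AddSubgroup (∀ k : ℕ, ZMod (n k)) :=
  (AddSubgroup.zmultiples (fun k => (1 : ZMod (n k)))).topologicalClosure

/-- The inverse limit of the cyclic groups `ℤ_{m_k}` (along the natural projections coming from
`m_k ∣ m_{k+1}`), realized as the closed subgroup of `∏_k ℤ_{m_k}` of compatible sequences. -/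
def invLim (m : ℕ → ℕ) (hm : ∀ k, m k ∣ m (k + 1)) : AddSubgroup (∀ k : ℕ, ZMod (m k)) where
  carrier := {x | ∀ k, ZMod.castHom (hm k) (ZMod (m k)) (x (k + 1)) = x k}
  add_mem' := by
    intro a b ha hb k
    simp only [Pi.add_apply, map_add, ha k, hb k]
  zero_mem' := by
    intro k
    simp
  neg_mem' := by
    intro a ha k
    simp only [Pi.neg_apply, map_neg, ha k]

/-!
Every element of `B̄` is a compatible sequence, and conversely a compatible sequence `x` is the
limit of the integers `(x K).val`, which agree with `x` up to level `K`; so `B̄` is the inverse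
limit of the `ℤ_{n_k}`. For `m_k ∣ n_k`, coordinatewise reduction maps `B̄` onto the inverse limit
of the `ℤ_{m_k}`: the image is compact, hence closed, and contains the dense subgroup `ℤE`. By
compactness `B̄` modulo the kernel is then homeomorphic to that inverse limit, which gives (2).
For (1), the image of a closed subgroup `N` in `ℤ_{n_k}` is cut out by a divisor `m_k` of `n_k`;
the `m_k` form a divisibility chain, and `N`, being closed, is the whole kernel of the reduction
modulo `(m_k)`.
-/

open Filter Topology

theorem ZMod.cast_cast_of_dvd {a b c : ℕ} (hab : a ∣ b) (hbc : b ∣ c) (x : ZMod c) :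
    ((x.cast : ZMod b).cast : ZMod a) = x.cast := by
  simpa only [RingHom.comp_apply, ZMod.castHom_apply] using
    RingHom.congr_fun (ZMod.castHom_comp hab hbc) x

theorem ZMod.exists_dvd_forall_mem_iff_cast_eq_zero {n : ℕ} (H : AddSubgroup (ZMod n)) :
    ∃ m, m ∣ n ∧ ∀ x : ZMod n, x ∈ H ↔ (x.cast : ZMod m) = 0 := by
  obtain ⟨a, ha⟩ := Int.subgroup_cyclic (H.comap (Int.castAddHom (ZMod n)))
  rw [← AddSubgroup.zmultiples_eq_closure] at ha
  have mem_iff (j : ℤ) : (j : ZMod n) ∈ H ↔ a ∣ j := by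
    rw [← Int.mem_zmultiples_iff, ← ha]; rfl
  have hdvd : a.natAbs ∣ n :=
    Int.natCast_dvd_natCast.mp <| Int.natAbs_dvd.mpr ((mem_iff n).mp (by simp))
  refine ⟨a.natAbs, hdvd, fun x => ?_⟩
  obtain ⟨j, rfl⟩ := ZMod.intCast_surjective x
  rw [mem_iff, ZMod.cast_intCast hdvd, ZMod.intCast_zmod_eq_zero_iff_dvd, Int.natAbs_dvd]

noncomputable def ContinuousAddEquiv.quotientKerEquivOfSurjective {G H : Type*} [AddGroup G]
    [TopologicalSpace G] [CompactSpace G] [AddGroup H] [TopologicalSpace H] [T2Space H]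
    (f : G →+ H) (hf : Continuous f) (hsurj : Function.Surjective f) : G ⧸ f.ker ≃ₜ+ H :=
  have hcont : Continuous (QuotientAddGroup.quotientKerEquivOfSurjective f hsurj) :=
    (QuotientAddGroup.isQuotientMap_mk f.ker).continuous_iff.2 hf
  { QuotientAddGroup.quotientKerEquivOfSurjective f hsurj with
    continuous_toFun := hcont
    continuous_invFun := (hcont.homeoOfEquivCompactToT2
      (f := (QuotientAddGroup.quotientKerEquivOfSurjective f hsurj).toEquiv)).symm.continuous }

section invLim

variable {m : ℕ → ℕ} {hm : ∀ k, m k ∣ m (k + 1)}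

theorem cast_apply_of_mem_invLim {x : ∀ k, ZMod (m k)} (hx : x ∈ invLim m hm) {k K : ℕ}
    (hkK : k ≤ K) : ((x K).cast : ZMod (m k)) = x k := by
  induction K, hkK using Nat.le_induction with
  | base => exact ZMod.cast_id _ _
  | succ K hkK ih =>
    rw [← ih, ← hx K, ZMod.castHom_apply,
      ZMod.cast_cast_of_dvd (Nat.rel_of_forall_rel_succ_of_le (· ∣ ·) hm hkK) (hm K)]

theorem isClosed_invLim (m : ℕ → ℕ) (hm : ∀ k, m k ∣ m (k + 1)) :
    IsClosed (invLim m hm : Set (∀ k, ZMod (m k))) := by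
  change IsClosed {x | ∀ k, _}
  rw [Set.ofPred_forall]
  exact isClosed_iInter fun k => isClosed_eq
    (continuous_of_discreteTopology.comp (continuous_apply (k + 1))) (continuous_apply k)

end invLim

section Bsub

variable {n m : ℕ → ℕ}

theorem Bsub_le_invLim (hdvd : ∀ k, n k ∣ n (k + 1)) : Bsub n ≤ invLim n hdvd :=
  AddSubgroup.topologicalClosure_minimal _
    (AddSubgroup.zmultiples_le_of_mem fun _ => map_one _) (isClosed_invLim n hdvd)

theorem invLim_le_Bsub (hpos : ∀ k, 0 < n k) (hdvd : ∀ k, n k ∣ n (k + 1)) :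
    invLim n hdvd ≤ Bsub n := by
  intro x hx
  have approx : Tendsto (fun K => (x K).val • fun k => (1 : ZMod (n k))) atTop (𝓝 x) := by
    refine tendsto_pi_nhds.2 fun k => tendsto_nhds_of_eventually_eq ?_
    filter_upwards [eventually_ge_atTop k] with K hkK
    have : NeZero (n K) := ⟨(hpos K).ne'⟩
    simp [ZMod.natCast_val, cast_apply_of_mem_invLim hx hkK]
  exact isClosed_closure.mem_of_tendsto approx
    (.of_forall fun K => subset_closure (AddSubgroup.nsmul_mem_zmultiples _ _))

theorem compactSpace_Bsub (hpos : ∀ k, 0 < n k) : CompactSpace (Bsub n) :=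
  have : ∀ k, NeZero (n k) := fun k => ⟨(hpos k).ne'⟩
  isCompact_iff_compactSpace.mp (AddSubgroup.isClosed_topologicalClosure _).isCompact

theorem mem_of_forall_exists_apply_eq (hdvd : ∀ k, n k ∣ n (k + 1)) {N : AddSubgroup (Bsub n)}
    (hN : IsClosed (N : Set (Bsub n))) {x : Bsub n}
    (hx : ∀ K, ∃ y ∈ N, (y : ∀ k, ZMod (n k)) K = (x : ∀ k, ZMod (n k)) K) : x ∈ N := by
  choose y hyN hyx using hx
  have approx : Tendsto y atTop (𝓝 x) := by
    rw [tendsto_subtype_rng, tendsto_pi_nhds]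
    refine fun k => tendsto_nhds_of_eventually_eq ?_
    filter_upwards [eventually_ge_atTop k] with K hkK
    rw [← cast_apply_of_mem_invLim (Bsub_le_invLim hdvd (y K).2) hkK, hyx K,
      cast_apply_of_mem_invLim (Bsub_le_invLim hdvd x.2) hkK]
  exact hN.mem_of_tendsto approx (.of_forall hyN)

def reduceMod (hmn : ∀ k, m k ∣ n k) : (∀ k, ZMod (n k)) →+ ∀ k, ZMod (m k) :=
  AddMonoidHom.pi fun k =>
    (ZMod.castHom (hmn k) (ZMod (m k))).toAddMonoidHom.comp (Pi.evalAddMonoidHom _ k)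

variable (hmn : ∀ k, m k ∣ n k)

theorem continuous_reduceMod : Continuous (reduceMod hmn) :=
  continuous_pi fun k => continuous_of_discreteTopology.comp (continuous_apply k)

theorem reduceMod_one : reduceMod hmn (fun _ => 1) = fun _ => 1 :=
  funext fun k => map_one (ZMod.castHom (hmn k) (ZMod (m k)))

theorem Bsub_le_comap_reduceMod : Bsub n ≤ (Bsub m).comap (reduceMod hmn) :=
  AddSubgroup.topologicalClosure_minimal _
    (AddSubgroup.zmultiples_le_of_mem <| by
      rw [AddSubgroup.mem_comap, reduceMod_one]
      exact AddSubgroup.le_topologicalClosure _ (AddSubgroup.mem_zmultiples _))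
    ((AddSubgroup.isClosed_topologicalClosure _).preimage (continuous_reduceMod hmn))

theorem Bsub_le_map_reduceMod (hpos : ∀ k, 0 < n k) : Bsub m ≤ (Bsub n).map (reduceMod hmn) := by
  have : ∀ k, NeZero (n k) := fun k => ⟨(hpos k).ne'⟩
  refine AddSubgroup.topologicalClosure_minimal _ (AddSubgroup.zmultiples_le_of_mem ?_) ?_
  · rw [← reduceMod_one hmn]
    exact AddSubgroup.mem_map_of_mem _
      (AddSubgroup.le_topologicalClosure _ (AddSubgroup.mem_zmultiples _))
  · exact ((AddSubgroup.isClosed_topologicalClosure _).isCompact.image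
      (continuous_reduceMod hmn)).isClosed

variable (hm : ∀ k, m k ∣ m (k + 1))

noncomputable def reduceModBsub : Bsub n →+ invLim m hm :=
  ((reduceMod hmn).comp (Bsub n).subtype).codRestrict _ fun x =>
    Bsub_le_invLim hm (Bsub_le_comap_reduceMod hmn x.2)

theorem continuous_reduceModBsub : Continuous (reduceModBsub hmn hm) :=
  ((continuous_reduceMod hmn).comp continuous_subtype_val).subtype_mk _

theorem mem_ker_reduceModBsub {x : Bsub n} :
    x ∈ (reduceModBsub hmn hm).ker ↔ ∀ k, ((x : ∀ k, ZMod (n k)) k).cast = (0 : ZMod (m k)) := by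
  rw [AddMonoidHom.mem_ker, Subtype.ext_iff, funext_iff]
  rfl

theorem reduceModBsub_surjective (hpos : ∀ k, 0 < n k) :
    Function.Surjective (reduceModBsub hmn hm) := by
  intro y
  have hmpos k : 0 < m k := Nat.pos_of_dvd_of_pos (hmn k) (hpos k)
  obtain ⟨x, hx, hxy⟩ := Bsub_le_map_reduceMod hmn hpos (invLim_le_Bsub hmpos hm y.2)
  exact ⟨⟨x, hx⟩, Subtype.ext hxy⟩

noncomputable def quotientKerReduceModBsubEquiv (hpos : ∀ k, 0 < n k) :
    Bsub n ⧸ (reduceModBsub hmn hm).ker ≃ₜ+ invLim m hm :=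
  have := compactSpace_Bsub hpos
  .quotientKerEquivOfSurjective _ (continuous_reduceModBsub hmn hm)
    (reduceModBsub_surjective hmn hm hpos)

end Bsub

theorem exists_ker_reduceModBsub_eq {n : ℕ → ℕ} (hdvd : ∀ k, n k ∣ n (k + 1))
    (N : AddSubgroup (Bsub n)) (hN : IsClosed (N : Set (Bsub n))) :
    ∃ (m : ℕ → ℕ) (hmn : ∀ k, m k ∣ n k) (hm : ∀ k, m k ∣ m (k + 1)),
      (reduceModBsub hmn hm).ker = N := by
  let H k : AddSubgroup (ZMod (n k)) := N.map ((Pi.evalAddMonoidHom _ k).comp (Bsub n).subtype)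
  choose m hmn hH using fun k => ZMod.exists_dvd_forall_mem_iff_cast_eq_zero (H k)
  have hm k : m k ∣ m (k + 1) := by
    obtain ⟨y, hyN, hy⟩ : ((m (k + 1) : ℕ) : ZMod (n (k + 1))) ∈ H (k + 1) :=
      (hH _ _).2 (by simp [ZMod.cast_natCast (hmn _)])
    have : ((m (k + 1) : ℕ) : ZMod (n k)) ∈ H k := by
      refine ⟨y, hyN, ?_⟩
      change (y : ∀ k, ZMod (n k)) (k + 1) = _ at hy
      change (y : ∀ k, ZMod (n k)) k = _
      rw [← Bsub_le_invLim hdvd y.2 k, ZMod.castHom_apply, hy, ZMod.cast_natCast (hdvd k)]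
    rwa [hH, ZMod.cast_natCast (hmn k), ZMod.natCast_eq_zero_iff] at this
  refine ⟨m, hmn, hm, le_antisymm (fun x hx => ?_) (fun x hx => ?_)⟩
  · exact mem_of_forall_exists_apply_eq hdvd hN fun K =>
      (hH K _).2 ((mem_ker_reduceModBsub hmn hm).1 hx K)
  · exact (mem_ker_reduceModBsub hmn hm).2 fun k => (hH k _).1 ⟨x, hx, rfl⟩

theorem statement_19_general (n : ℕ → ℕ) (hpos : ∀ k, 0 < n k)
    (hdvd : ∀ k, n k ∣ n (k + 1)) :
    (∀ N : AddSubgroup ↥(Bsub n), IsClosed (N : Set ↥(Bsub n)) →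
      ∃ m : ℕ → ℕ, ∃ (_ : ∀ k, 0 < m k) (_ : ∀ k, m k ∣ n k) (hm : ∀ k, m k ∣ m (k + 1)),
        ∃ e : (↥(Bsub n) ⧸ N) ≃ₜ ↥(invLim m hm),
          ∀ x y : ↥(Bsub n) ⧸ N, e (x + y) = e x + e y) ∧
    (∀ m : ℕ → ℕ, (∀ k, 0 < m k) → (∀ k, m k ∣ n k) → ∀ hm : ∀ k, m k ∣ m (k + 1),
      ∃ N : AddSubgroup ↥(Bsub n), IsClosed (N : Set ↥(Bsub n)) ∧
        ∃ e : ↥(invLim m hm) ≃ₜ (↥(Bsub n) ⧸ N),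
          ∀ x y : ↥(invLim m hm), e (x + y) = e x + e y) := by
  refine ⟨fun N hN => ?_, fun m _ hmn hm => ?_⟩
  · obtain ⟨m, hmn, hm, rfl⟩ := exists_ker_reduceModBsub_eq hdvd N hN
    let e := quotientKerReduceModBsubEquiv hmn hm hpos
    exact ⟨m, fun k => Nat.pos_of_dvd_of_pos (hmn k) (hpos k), hmn, hm, e.toHomeomorph, map_add e⟩
  · let e := quotientKerReduceModBsubEquiv hmn hm hpos
    exact ⟨_, isClosed_singleton.preimage (continuous_reduceModBsub hmn hm),
      e.symm.toHomeomorph, map_add e.symm⟩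

/-- (1) Every quotient of `B̄` by a closed subgroup is a procyclic group,
isomorphic (as a topological group) to an inverse limit of cyclic groups `ℤ_{m_k}` with
`m_k ∣ n_k` and `m_k ∣ m_{k+1}`; (2) conversely, for every sequence `(m_k)` of positive
integers with `m_k ∣ n_k` and `m_k ∣ m_{k+1}`, the inverse limit of the `ℤ_{m_k}` is
isomorphic as a topological group to a quotient of `B̄` by a closed subgroup. -/
theorem statement_19 (n : ℕ → ℕ) (hpos : ∀ k, 0 < n k) (hmono : StrictMono n)
    (hdvd : ∀ k, n k ∣ n (k + 1)) :
    (∀ N : AddSubgroup ↥(Bsub n), IsClosed (N : Set ↥(Bsub n)) →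
      ∃ m : ℕ → ℕ, ∃ (_ : ∀ k, 0 < m k) (_ : ∀ k, m k ∣ n k) (hm : ∀ k, m k ∣ m (k + 1)),
        ∃ e : (↥(Bsub n) ⧸ N) ≃ₜ ↥(invLim m hm),
          ∀ x y : ↥(Bsub n) ⧸ N, e (x + y) = e x + e y) ∧
    (∀ m : ℕ → ℕ, (∀ k, 0 < m k) → (∀ k, m k ∣ n k) → ∀ hm : ∀ k, m k ∣ m (k + 1),
      ∃ N : AddSubgroup ↥(Bsub n), IsClosed (N : Set ↥(Bsub n)) ∧
        ∃ e : ↥(invLim m hm) ≃ₜ (↥(Bsub n) ⧸ N),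
          ∀ x y : ↥(invLim m hm), e (x + y) = e x + e y) :=
  statement_19_general n hpos hdvd
end
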